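/- arXiv:1705.04721 — 3 statements merged into one kernel-verified Lean document; each statement's English description precedes it below -/
import Mathlib

section
/- If X_free ⊂ ℝⁿ is open, then the set X_free^traj of trajectories x ∈ X_{x_ic} satisfying x(t) ∈ X_free for all t ∈ [0, τ(x)] is an open subset of the metric space (X_{x_ic}, d_X). -/
open Set

/-- A trajectory from `x_ic`: Lipschitz constant at most `M`, compact time domain `[0, τ]`. -/
structure Traj (n : ℕ) (M : NNReal) (xic : EuclideanSpace ℝ (Fin n)) where
  τ : ℝ
  τ_pos : 0 < τ
  val : ℝ → EuclideanSpace ℝ (Fin n)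
  init : val 0 = xic
  lip : LipschitzOnWith M val (Icc (0 : ℝ) τ)

/-- The metric `d_X` on the trajectory space. -/
noncomputable def dX {n : ℕ} {M : NNReal} {xic : EuclideanSpace ℝ (Fin n)}
    (x₁ x₂ : Traj n M xic) : ℝ :=
  (⨆ t : Icc (0 : ℝ) (min x₁.τ x₂.τ), ‖x₁.val t - x₂.val t‖) +
    (M : ℝ) * |x₁.τ - x₂.τ|

/-- If `X_free ⊆ ℝⁿ` is open, then the set of trajectories remaining in `X_free`
is open in the metric space `(X_{x_ic}, d_X)`. -/
theorem trajectories_in_free_space_open {n : ℕ} (M : NNReal)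
    (xic : EuclideanSpace ℝ (Fin n))
    (Xfree : Set (EuclideanSpace ℝ (Fin n))) (hXfree : IsOpen Xfree) :
    ∀ x : Traj n M xic, (∀ t ∈ Icc (0 : ℝ) x.τ, x.val t ∈ Xfree) →
      ∃ ε > 0, ∀ y : Traj n M xic,
        dX x y < ε → ∀ t ∈ Icc (0 : ℝ) y.τ, y.val t ∈ Xfree := by
  intro x hx
  set K : Set (EuclideanSpace ℝ (Fin n)) := x.val '' Icc (0 : ℝ) x.τ with hKdef
  have hKcompact : IsCompact K := isCompact_Icc.image_of_continuousOn x.lip.continuousOn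
  have hKsub : K ⊆ Xfree := by
    rintro _ ⟨t, ht, rfl⟩
    exact hx t ht
  obtain ⟨δ, δpos, hδ⟩ := hKcompact.exists_thickening_subset_open hXfree hKsub
  refine ⟨δ, δpos, fun y hdxy t ht => ?_⟩
  -- boundedness of the sup family
  have hmin_nonneg : (0 : ℝ) ≤ min x.τ y.τ := le_min x.τ_pos.le y.τ_pos.le
  have hbdd : BddAbove (range fun s : Icc (0 : ℝ) (min x.τ y.τ) => ‖x.val s - y.val s‖) := by
    refine ⟨2 * (M : ℝ) * min x.τ y.τ, ?_⟩
    rintro _ ⟨⟨s, hs⟩, rfl⟩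
    have hsx : s ∈ Icc (0 : ℝ) x.τ := ⟨hs.1, hs.2.trans (min_le_left _ _)⟩
    have hsy : s ∈ Icc (0 : ℝ) y.τ := ⟨hs.1, hs.2.trans (min_le_right _ _)⟩
    have h0x : (0 : ℝ) ∈ Icc (0 : ℝ) x.τ := ⟨le_refl 0, x.τ_pos.le⟩
    have h0y : (0 : ℝ) ∈ Icc (0 : ℝ) y.τ := ⟨le_refl 0, y.τ_pos.le⟩
    have hx1 : dist (x.val s) xic ≤ (M : ℝ) * s := by
      have := x.lip.dist_le_mul s hsx 0 h0x
      simpa [x.init, abs_of_nonneg hs.1] using this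
    have hy1 : dist (y.val s) xic ≤ (M : ℝ) * s := by
      have := y.lip.dist_le_mul s hsy 0 h0y
      simpa [y.init, abs_of_nonneg hs.1] using this
    have : dist (x.val s) (y.val s) ≤ (M : ℝ) * s + (M : ℝ) * s :=
      (dist_triangle _ xic _).trans (by
        have := hy1; rw [dist_comm] at this; linarith)
    calc ‖x.val s - y.val s‖ = dist (x.val s) (y.val s) := (dist_eq_norm _ _).symm
      _ ≤ (M : ℝ) * s + (M : ℝ) * s := this
      _ ≤ 2 * (M : ℝ) * min x.τ y.τ := by
          have hMs : (M : ℝ) * s ≤ (M : ℝ) * min x.τ y.τ :=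
            mul_le_mul_of_nonneg_left hs.2 M.coe_nonneg
          linarith
  have hsup_le : (⨆ s : Icc (0 : ℝ) (min x.τ y.τ), ‖x.val s - y.val s‖) + (M : ℝ) * |x.τ - y.τ|
      < δ := hdxy
  have hMτ_nonneg : (0 : ℝ) ≤ (M : ℝ) * |x.τ - y.τ| :=
    mul_nonneg M.coe_nonneg (abs_nonneg _)
  rcases le_or_gt t x.τ with htx | htx
  · -- t ≤ x.τ, compare directly
    have htmin : t ∈ Icc (0 : ℝ) (min x.τ y.τ) := ⟨ht.1, le_min htx ht.2⟩
    have hle : ‖x.val t - y.val t‖ ≤ ⨆ s : Icc (0 : ℝ) (min x.τ y.τ), ‖x.val s - y.val s‖ :=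
      le_ciSup hbdd ⟨t, htmin⟩
    have hdist : dist (y.val t) (x.val t) < δ := by
      rw [dist_comm, dist_eq_norm]
      linarith
    exact hδ (Metric.mem_thickening_iff.2 ⟨x.val t, ⟨t, ⟨ht.1, htx⟩, rfl⟩, hdist⟩)
  · -- x.τ < t ≤ y.τ
    have hxy : x.τ ≤ y.τ := htx.le.trans ht.2
    have hmin : min x.τ y.τ = x.τ := min_eq_left hxy
    have hsmem : x.τ ∈ Icc (0 : ℝ) (min x.τ y.τ) := ⟨x.τ_pos.le, hmin.ge⟩
    have hsy : x.τ ∈ Icc (0 : ℝ) y.τ := ⟨x.τ_pos.le, hxy⟩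
    have h1 : dist (y.val t) (y.val x.τ) ≤ (M : ℝ) * |x.τ - y.τ| := by
      have := y.lip.dist_le_mul t ht x.τ hsy
      have habs : |t - x.τ| ≤ |x.τ - y.τ| := by
        rw [abs_of_nonneg (by linarith : (0:ℝ) ≤ t - x.τ),
          abs_of_nonpos (by linarith : x.τ - y.τ ≤ 0)]
        linarith [ht.2]
      exact this.trans (mul_le_mul_of_nonneg_left habs M.coe_nonneg)
    have h2 : ‖x.val x.τ - y.val x.τ‖ ≤ ⨆ s : Icc (0 : ℝ) (min x.τ y.τ), ‖x.val s - y.val s‖ :=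
      le_ciSup hbdd ⟨x.τ, hsmem⟩
    have hdist : dist (y.val t) (x.val x.τ) < δ := by
      have := dist_triangle (y.val t) (y.val x.τ) (x.val x.τ)
      have h2' : dist (y.val x.τ) (x.val x.τ) ≤
          ⨆ s : Icc (0 : ℝ) (min x.τ y.τ), ‖x.val s - y.val s‖ := by
        rw [dist_comm, dist_eq_norm]; exact h2
      linarith
    exact hδ (Metric.mem_thickening_iff.2
      ⟨x.val x.τ, ⟨x.τ, ⟨x.τ_pos.le, le_refl _⟩, rfl⟩, hdist⟩)
end

section
/- If X_free and X_goal are open subsets of ℝⁿ, then the set X_goal^traj of trajectories that remain in X_free and terminate in X_goal (i.e., x(t) ∈ X_free for all t ∈ [0,τ(x)] and x(τ(x)) ∈ X_goal) is an open subset of (X_{x_ic}, d_X). -/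
open Set

/-! The image of `x` on `[0, τ(x)]` is compact, so some uniform thickening of it still lies in
`X_free`, and some ball around `x(τ(x))` lies in `X_goal`. A trajectory `y` that is `d_X`-close to
`x` stays uniformly close to `x`: for `t ≤ τ(x)` compare `y(t)` with `x(t)`, and beyond `τ(x)`
the `M`-Lipschitz bound on `y` pays at most `M |τ(x) - τ(y)|` to return to time `τ(x)`. -/

namespace Traj

variable {n : ℕ} {M : NNReal} {xic : EuclideanSpace ℝ (Fin n)}

lemma continuousOn (x : Traj n M xic) : ContinuousOn x.val (Icc 0 x.τ) :=
  x.lip.continuousOn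

lemma dX_comm (x y : Traj n M xic) : dX x y = dX y x := by
  rw [dX, dX, min_comm x.τ, abs_sub_comm x.τ]
  simp only [norm_sub_rev (x.val _)]

lemma norm_sub_le_iSup (x y : Traj n M xic) {t : ℝ} (ht : t ∈ Icc 0 (min x.τ y.τ)) :
    ‖x.val t - y.val t‖ ≤ ⨆ s : Icc (0 : ℝ) (min x.τ y.τ), ‖x.val s - y.val s‖ := by
  have hc : ContinuousOn (fun s => ‖x.val s - y.val s‖) (Icc 0 (min x.τ y.τ)) :=
    ((x.continuousOn.mono (Icc_subset_Icc_right (min_le_left _ _))).sub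
      (y.continuousOn.mono (Icc_subset_Icc_right (min_le_right _ _)))).norm
  have hbdd := isCompact_Icc.bddAbove_image hc
  rw [image_eq_range] at hbdd
  exact le_ciSup hbdd ⟨t, ht⟩

lemma dist_le_dX (x y : Traj n M xic) {t : ℝ} (ht : t ∈ Icc 0 y.τ) :
    dist (y.val t) (x.val (min t x.τ)) ≤ dX x y := by
  set u := min t x.τ
  have hu : u ∈ Icc 0 (min x.τ y.τ) :=
    ⟨le_min ht.1 x.τ_pos.le, le_min (min_le_right _ _) ((min_le_left _ _).trans ht.2)⟩
  have htu : dist t u ≤ |x.τ - y.τ| := by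
    rcases le_total t x.τ with h | h
    · simp [u, h]
    · rw [Real.dist_eq, show u = x.τ from min_eq_right h, abs_sub_comm x.τ,
        abs_of_nonneg (sub_nonneg.2 h)]
      exact (sub_le_sub_right ht.2 _).trans (le_abs_self _)
  calc dist (y.val t) (x.val u) ≤ dist (y.val t) (y.val u) + dist (y.val u) (x.val u) :=
        dist_triangle _ _ _
    _ ≤ M * |x.τ - y.τ| + ⨆ s : Icc (0 : ℝ) (min x.τ y.τ), ‖x.val s - y.val s‖ := by
        gcongr
        · exact (y.lip.dist_le_mul t ht u ⟨hu.1, hu.2.trans (min_le_right _ _)⟩).trans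
            (by gcongr)
        · rw [dist_comm, dist_eq_norm]
          exact x.norm_sub_le_iSup y hu
    _ = dX x y := add_comm _ _

lemma dist_val_τ_le_dX (x y : Traj n M xic) : dist (y.val y.τ) (x.val x.τ) ≤ dX x y := by
  rcases le_total x.τ y.τ with h | h
  · simpa [min_eq_right h] using x.dist_le_dX y ⟨y.τ_pos.le, le_rfl⟩
  · simpa [min_eq_right h, dist_comm, dX_comm] using y.dist_le_dX x ⟨x.τ_pos.le, le_rfl⟩

end Traj

/-- If `X_free` and `X_goal` are open subsets of `ℝⁿ`, then the set of trajectories that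
remain in `X_free` and terminate in `X_goal` is open in `(X_{x_ic}, d_X)`. -/
theorem goal_trajectories_open {n : ℕ} (M : NNReal)
    (xic : EuclideanSpace ℝ (Fin n))
    (Xfree Xgoal : Set (EuclideanSpace ℝ (Fin n)))
    (hXfree : IsOpen Xfree) (hXgoal : IsOpen Xgoal) :
    ∀ x : Traj n M xic,
      ((∀ t ∈ Icc (0 : ℝ) x.τ, x.val t ∈ Xfree) ∧ x.val x.τ ∈ Xgoal) →
      ∃ ε > 0, ∀ y : Traj n M xic, dX x y < ε →
        ((∀ t ∈ Icc (0 : ℝ) y.τ, y.val t ∈ Xfree) ∧ y.val y.τ ∈ Xgoal) := by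
  rintro x ⟨hfree, hgoal⟩
  obtain ⟨δ₁, hδ₁, hthickening⟩ :=
    (isCompact_Icc.image_of_continuousOn x.continuousOn).exists_thickening_subset_open
      hXfree (image_subset_iff.2 hfree)
  obtain ⟨δ₂, hδ₂, hball⟩ := Metric.isOpen_iff.1 hXgoal _ hgoal
  refine ⟨min δ₁ δ₂, lt_min hδ₁ hδ₂, fun y hxy => ⟨fun t ht => ?_, ?_⟩⟩
  · have hs : min t x.τ ∈ Icc 0 x.τ := ⟨le_min ht.1 x.τ_pos.le, min_le_right _ _⟩
    exact hthickening (Metric.mem_thickening_iff.2 ⟨_, mem_image_of_mem _ hs,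
      (x.dist_le_dX y ht).trans_lt (hxy.trans_le (min_le_left _ _))⟩)
  · exact hball ((x.dist_val_τ_le_dX y).trans_lt (hxy.trans_le (min_le_right _ _)))
end

section
/- Semigroup property of the flow: for input signals u1, u2 ∈ U, φ_{x0}(u1u2) = φ_{x0}(u1)·φ_{y}(u2) (concatenation of trajectories), where y = [φ_{x0}(u1)](τ(u1)); i.e., the solution of the integral equation driven by the concatenated input equals the concatenation of the solution driven by u1 from x0 and the solution driven by u2 from the terminal state of the first. -/
/-!
The concatenated trajectory solves the integral equation driven by the concatenated input: split
the integral at `τ₁` and translate its second part back to the origin. Two solutions of the same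
equation coincide, because their distance `g` is continuous and satisfies `g t ≤ L ∫₀ᵗ g`, so
Grönwall's inequality applied to `∫₀ᵗ g` forces `g = 0`.
-/

open MeasureTheory Set Filter Topology

noncomputable def concatFn {E : Type*} (τ₁ : ℝ) (h₁ h₂ : ℝ → E) : ℝ → E :=
  fun t => if t < τ₁ then h₁ t else h₂ (t - τ₁)

section Concatenation

variable {E : Type*} {τ : ℝ} {g₁ g₂ : ℝ → E}

theorem concatFn_comp₂ {α β : Type*} (φ : α → β → E) (τ : ℝ) (a₁ a₂ : ℝ → α) (b₁ b₂ : ℝ → β) :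
    (fun s => φ (concatFn τ a₁ a₂ s) (concatFn τ b₁ b₂ s)) =
      concatFn τ (fun s => φ (a₁ s) (b₁ s)) (fun s => φ (a₂ s) (b₂ s)) := by
  funext s
  unfold concatFn
  split_ifs <;> rfl

theorem concatFn_of_lt {t : ℝ} (ht : t < τ) : concatFn τ g₁ g₂ t = g₁ t := if_pos ht

theorem concatFn_of_le {t : ℝ} (ht : τ ≤ t) : concatFn τ g₁ g₂ t = g₂ (t - τ) :=
  if_neg (not_lt.2 ht)

theorem Measurable.concatFn [MeasurableSpace E] (h₁ : Measurable g₁) (h₂ : Measurable g₂) :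
    Measurable (_root_.concatFn τ g₁ g₂) :=
  Measurable.ite measurableSet_Iio h₁ (h₂.comp (measurable_id.sub_const τ))

variable [NormedAddCommGroup E]

theorem integrableOn_Icc_concatFn {T : ℝ} (h₁ : IntegrableOn g₁ (Icc 0 τ))
    (h₂ : IntegrableOn g₂ (Icc 0 (T - τ))) : IntegrableOn (concatFn τ g₁ g₂) (Icc 0 T) := by
  have hleft : IntegrableOn (concatFn τ g₁ g₂) (Icc 0 τ) := by
    rw [integrableOn_Icc_iff_integrableOn_Ico] at h₁ ⊢
    exact h₁.congr_fun (fun _ hs => (concatFn_of_lt hs.2).symm) measurableSet_Ico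
  have hright : IntegrableOn (concatFn τ g₁ g₂) (Icc τ T) := by
    have h₂' := ((measurePreserving_sub_right volume τ).integrableOn_comp_preimage
      (measurableEmbedding_subRight τ)).2 h₂
    rw [preimage_sub_const_Icc, zero_add, sub_add_cancel] at h₂'
    exact h₂'.congr_fun (fun _ hs => (concatFn_of_le hs.1).symm) measurableSet_Icc
  refine (hleft.union hright).mono_set fun s hs => ?_
  rcases lt_or_ge s τ with h | h
  exacts [Or.inl ⟨hs.1, h.le⟩, Or.inr ⟨h, hs.2⟩]

variable [NormedSpace ℝ E]

theorem intervalIntegral_concatFn {a t : ℝ} (ha : a ≤ τ) (ht : τ ≤ t)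
    (h₁ : IntervalIntegrable g₁ volume a τ) (h₂ : IntervalIntegrable g₂ volume 0 (t - τ)) :
    ∫ s in a..t, concatFn τ g₁ g₂ s = (∫ s in a..τ, g₁ s) + ∫ s in 0..(t - τ), g₂ s := by
  have hleft : EqOn g₁ (concatFn τ g₁ g₂) (uIoo a τ) := by
    rw [uIoo_of_le ha]
    exact fun _ hs => (concatFn_of_lt hs.2).symm
  have hright : EqOn (fun s => g₂ (s - τ)) (concatFn τ g₁ g₂) (uIcc τ t) := by
    rw [uIcc_of_le ht]
    exact fun _ hs => (concatFn_of_le hs.1).symm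
  have h₂' : IntervalIntegrable (fun s => g₂ (s - τ)) volume τ t := by
    simpa using h₂.comp_sub_right τ
  rw [← intervalIntegral.integral_add_adjacent_intervals (h₁.congr_uIoo hleft)
      (h₂'.congr (hright.mono uIoc_subset_uIcc)),
    ← intervalIntegral.integral_congr_uIoo hleft, ← intervalIntegral.integral_congr hright,
    intervalIntegral.integral_comp_sub_right, sub_self]

end Concatenation

theorem eqOn_zero_of_le_mul_integral {g : ℝ → ℝ} {L T : ℝ} (hg : ContinuousOn g (Icc 0 T))
    (hg₀ : ∀ t ∈ Icc 0 T, 0 ≤ g t) (hle : ∀ t ∈ Icc 0 T, g t ≤ L * ∫ s in Icc 0 t, g s) :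
    EqOn g 0 (Icc 0 T) := by
  set G : ℝ → ℝ := fun t => ∫ s in 0..t, g s
  have hG : ∀ t ∈ Icc 0 T, G t = ∫ s in Icc 0 t, g s := fun t ht => by
    rw [integral_Icc_eq_integral_Ioc]
    exact intervalIntegral.integral_of_le ht.1
  have hG₀ : ∀ t ∈ Icc 0 T, 0 ≤ G t := fun t ht => by
    rw [hG t ht]
    exact setIntegral_nonneg measurableSet_Icc fun s hs => hg₀ s ⟨hs.1, hs.2.trans ht.2⟩
  have hderiv : ∀ t ∈ Ico 0 T, HasDerivWithinAt G (g t) (Ici t) t := fun t ht => by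
    have hmem : Icc 0 T ∈ 𝓝[>] t := Icc_mem_nhdsGT_of_mem ht
    exact intervalIntegral.integral_hasDerivWithinAt_right
      ((hg.mono (Icc_subset_Icc_right ht.2.le)).intervalIntegrable_of_Icc ht.1)
      ((hg.stronglyMeasurableAtFilter_nhdsWithin measurableSet_Icc t).filter_mono
        (nhdsWithin_le_of_mem hmem))
      ((hg t (Ico_subset_Icc_self ht)).mono_of_mem_nhdsWithin hmem)
  have hGc : ContinuousOn G (Icc 0 T) :=
    (intervalIntegral.continuousOn_primitive_Icc hg.integrableOn_Icc).congr hG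
  have hG_zero := eq_zero_of_abs_deriv_le_mul_abs_self_of_eq_zero_right hGc hderiv
    intervalIntegral.integral_same fun t ht => by
      rw [Real.norm_of_nonneg (hg₀ t (Ico_subset_Icc_self ht)),
        Real.norm_of_nonneg (hG₀ t (Ico_subset_Icc_self ht)), hG t (Ico_subset_Icc_self ht)]
      exact hle t (Ico_subset_Icc_self ht)
  intro t ht
  refine le_antisymm ?_ (hg₀ t ht)
  simpa [← hG t ht, hG_zero t ht] using hle t ht

section IntegralEquation

variable {E W : Type*} [NormedAddCommGroup E] [NormedSpace ℝ E]

def IsIntegralSolution (f : E → W → E) (u : ℝ → W) (x₀ : E) (T : ℝ) (x : ℝ → E) : Prop :=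
  ∀ t ∈ Icc 0 T, x t = x₀ + ∫ s in Icc 0 t, f (x s) (u s)

variable {f : E → W → E} {u : ℝ → W} {x₀ : E} {T : ℝ} {x y : ℝ → E}

theorem isIntegralSolution_iff_intervalIntegral :
    IsIntegralSolution f u x₀ T x ↔ ∀ t ∈ Icc 0 T, x t = x₀ + ∫ s in 0..t, f (x s) (u s) := by
  refine forall₂_congr fun t ht => ?_
  rw [integral_Icc_eq_integral_Ioc, intervalIntegral.integral_of_le ht.1]

theorem IsIntegralSolution.concatFn {τ₁ τ₂ : ℝ} {u₁ u₂ : ℝ → W} {x₁ x₂ : ℝ → E} (hτ₁ : 0 ≤ τ₁)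
    (h₁ : IsIntegralSolution f u₁ x₀ τ₁ x₁) (h₂ : IsIntegralSolution f u₂ (x₁ τ₁) τ₂ x₂)
    (hi₁ : IntegrableOn (fun s => f (x₁ s) (u₁ s)) (Icc 0 τ₁))
    (hi₂ : IntegrableOn (fun s => f (x₂ s) (u₂ s)) (Icc 0 τ₂)) :
    IsIntegralSolution f (_root_.concatFn τ₁ u₁ u₂) x₀ (τ₁ + τ₂) (_root_.concatFn τ₁ x₁ x₂) := by
  rw [isIntegralSolution_iff_intervalIntegral] at h₁ h₂ ⊢
  intro t ht
  rw [concatFn_comp₂ f]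
  rcases lt_or_ge t τ₁ with hlt | hge
  · rw [concatFn_of_lt hlt, h₁ t ⟨ht.1, hlt.le⟩]
    congr 1
    refine intervalIntegral.integral_congr fun s hs => ?_
    rw [uIcc_of_le ht.1] at hs
    rw [concatFn_of_lt (hs.2.trans_lt hlt)]
  · have ht₂ : t - τ₁ ∈ Icc 0 τ₂ := ⟨sub_nonneg.2 hge, by linarith [ht.2]⟩
    rw [concatFn_of_le hge, h₂ _ ht₂, h₁ τ₁ ⟨hτ₁, le_rfl⟩, add_assoc,
      intervalIntegral_concatFn hτ₁ hge
        ((intervalIntegrable_iff_integrableOn_Icc_of_le hτ₁).2 hi₁)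
        ((intervalIntegrable_iff_integrableOn_Icc_of_le ht₂.1).2
          (hi₂.mono_set (Icc_subset_Icc_right ht₂.2)))]

theorem IsIntegralSolution.eqOn {L : NNReal} (hf : ∀ w, LipschitzWith L fun y => f y w)
    (hx : IsIntegralSolution f u x₀ T x) (hy : IsIntegralSolution f u x₀ T y)
    (hxi : IntegrableOn (fun s => f (x s) (u s)) (Icc 0 T))
    (hyi : IntegrableOn (fun s => f (y s) (u s)) (Icc 0 T)) : EqOn x y (Icc 0 T) := by
  have hdiff : ∀ t ∈ Icc 0 T, x t - y t = ∫ s in Icc 0 t, (f (x s) (u s) - f (y s) (u s)) := by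
    intro t ht
    have hsub : Icc 0 t ⊆ Icc 0 T := Icc_subset_Icc_right ht.2
    rw [hx t ht, hy t ht, integral_sub (hxi.mono_set hsub) (hyi.mono_set hsub),
      add_sub_add_left_eq_sub]
  have hcont : ContinuousOn (fun t => ‖x t - y t‖) (Icc 0 T) :=
    (intervalIntegral.continuousOn_primitive_Icc (hxi.sub hyi)).norm.congr fun t ht => by
      simp only [hdiff t ht, Pi.sub_apply]
  have hle : ∀ t ∈ Icc 0 T, ‖x t - y t‖ ≤ L * ∫ s in Icc 0 t, ‖x s - y s‖ := by
    intro t ht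
    have hsub : Icc 0 t ⊆ Icc 0 T := Icc_subset_Icc_right ht.2
    calc ‖x t - y t‖ = ‖∫ s in Icc 0 t, (f (x s) (u s) - f (y s) (u s))‖ := by rw [hdiff t ht]
      _ ≤ ∫ s in Icc 0 t, ‖f (x s) (u s) - f (y s) (u s)‖ := norm_integral_le_integral_norm _
      _ ≤ ∫ s in Icc 0 t, L * ‖x s - y s‖ := by
        refine setIntegral_mono_on ((hxi.sub hyi).mono_set hsub).norm
          ((hcont.mono hsub).integrableOn_Icc.const_mul _) measurableSet_Icc fun s _ => ?_
        simpa only [dist_eq_norm] using (hf (u s)).dist_le_mul (x s) (y s)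
      _ = L * ∫ s in Icc 0 t, ‖x s - y s‖ := integral_const_mul _ _
  intro t ht
  exact sub_eq_zero.1 (norm_eq_zero.1
    (eqOn_zero_of_le_mul_integral hcont (fun _ _ => norm_nonneg _) hle ht))

end IntegralEquation

theorem integrableOn_comp₂_of_norm_le {α E W F : Type*} [MeasurableSpace α] {μ : Measure α}
    [NormedAddCommGroup E] [MeasurableSpace E] [BorelSpace E] [SecondCountableTopology E]
    [MeasurableSpace W] [NormedAddCommGroup F] [MeasurableSpace F] [BorelSpace F]
    [SecondCountableTopology F] {f : E → W → F} (hfc : ∀ w, Continuous fun y => f y w)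
    (hfm : ∀ y, Measurable (f y)) {M : ℝ} (hfM : ∀ y w, ‖f y w‖ ≤ M) {s : Set α}
    (hs : μ s < ⊤) {x : α → E} {u : α → W} (hx : AEMeasurable x (μ.restrict s))
    (hu : AEMeasurable u (μ.restrict s)) : IntegrableOn (fun t => f (x t) (u t)) s μ :=
  .of_bound hs ((measurable_uncurry_of_continuous_of_measurable hfc hfm).comp_aemeasurable
    (hx.prodMk hu)).aestronglyMeasurable M (ae_of_all _ fun t => hfM (x t) (u t))

theorem flow_concatenation_general {n m : ℕ}
    (f : EuclideanSpace ℝ (Fin n) → EuclideanSpace ℝ (Fin m) → EuclideanSpace ℝ (Fin n))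
    (Lf : NNReal) (hfLip : ∀ w, LipschitzWith Lf (fun x => f x w))
    (hfMeas : ∀ x, Measurable (f x))
    (M : ℝ) (hfBdd : ∀ x w, ‖f x w‖ ≤ M)
    (τ₁ τ₂ : ℝ) (hτ₁ : 0 < τ₁)
    (u₁ u₂ : ℝ → EuclideanSpace ℝ (Fin m))
    (hu₁ : Measurable u₁) (hu₂ : Measurable u₂)
    (x₁ x₂ x : ℝ → EuclideanSpace ℝ (Fin n))
    (x₀ : EuclideanSpace ℝ (Fin n))
    -- `x₁ = φ_{x₀}(u₁)` on `[0, τ₁]`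
    (hx₁c : ContinuousOn x₁ (Icc (0 : ℝ) τ₁))
    (hx₁ : ∀ t ∈ Icc (0 : ℝ) τ₁, x₁ t = x₀ + ∫ s in Icc (0 : ℝ) t, f (x₁ s) (u₁ s))
    -- `x₂ = φ_y(u₂)` on `[0, τ₂]` with `y = x₁ τ₁`
    (hx₂c : ContinuousOn x₂ (Icc (0 : ℝ) τ₂))
    (hx₂ : ∀ t ∈ Icc (0 : ℝ) τ₂,
      x₂ t = x₁ τ₁ + ∫ s in Icc (0 : ℝ) t, f (x₂ s) (u₂ s))
    -- `x = φ_{x₀}(u₁u₂)` on `[0, τ₁ + τ₂]`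
    (hxc : ContinuousOn x (Icc (0 : ℝ) (τ₁ + τ₂)))
    (hx : ∀ t ∈ Icc (0 : ℝ) (τ₁ + τ₂),
      x t = x₀ + ∫ s in Icc (0 : ℝ) t, f (x s) (concatFn τ₁ u₁ u₂ s)) :
    ∀ t ∈ Icc (0 : ℝ) (τ₁ + τ₂), x t = concatFn τ₁ x₁ x₂ t := by
  have hint : ∀ {T : ℝ} {y : ℝ → EuclideanSpace ℝ (Fin n)} {u : ℝ → EuclideanSpace ℝ (Fin m)},
      ContinuousOn y (Icc 0 T) → Measurable u → IntegrableOn (fun s => f (y s) (u s)) (Icc 0 T) :=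
    fun hy hu => integrableOn_comp₂_of_norm_le (fun w => (hfLip w).continuous) hfMeas hfBdd
      measure_Icc_lt_top (hy.aestronglyMeasurable measurableSet_Icc).aemeasurable hu.aemeasurable
  have hi₁ := hint hx₁c hu₁
  have hi₂ := hint hx₂c hu₂
  have hconcat : IsIntegralSolution f (concatFn τ₁ u₁ u₂) x₀ (τ₁ + τ₂) (concatFn τ₁ x₁ x₂) :=
    IsIntegralSolution.concatFn hτ₁.le hx₁ hx₂ hi₁ hi₂
  refine IsIntegralSolution.eqOn hfLip hx hconcat (hint hxc (hu₁.concatFn hu₂)) ?_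
  rw [concatFn_comp₂ f]
  exact integrableOn_Icc_concatFn hi₁ (by rwa [add_sub_cancel_left])

/-- Semigroup property of the flow: the solution driven by the concatenated input
`u₁u₂` equals the concatenation of the solution driven by `u₁` from `x₀` and the
solution driven by `u₂` from the terminal state `y = [φ_{x₀}(u₁)](τ(u₁))`. -/
theorem flow_concatenation {n m : ℕ}
    (f : EuclideanSpace ℝ (Fin n) → EuclideanSpace ℝ (Fin m) → EuclideanSpace ℝ (Fin n))
    (Lf : NNReal) (hfLip : ∀ w, LipschitzWith Lf (fun x => f x w))
    (hfMeas : ∀ x, Measurable (f x))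
    (M : ℝ) (hfBdd : ∀ x w, ‖f x w‖ ≤ M)
    (τ₁ τ₂ : ℝ) (hτ₁ : 0 < τ₁) (hτ₂ : 0 < τ₂)
    (u₁ u₂ : ℝ → EuclideanSpace ℝ (Fin m))
    (hu₁ : Measurable u₁) (hu₂ : Measurable u₂)
    (x₁ x₂ x : ℝ → EuclideanSpace ℝ (Fin n))
    (x₀ : EuclideanSpace ℝ (Fin n))
    -- `x₁ = φ_{x₀}(u₁)` on `[0, τ₁]`
    (hx₁c : ContinuousOn x₁ (Icc (0 : ℝ) τ₁))
    (hx₁ : ∀ t ∈ Icc (0 : ℝ) τ₁, x₁ t = x₀ + ∫ s in Icc (0 : ℝ) t, f (x₁ s) (u₁ s))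
    -- `x₂ = φ_y(u₂)` on `[0, τ₂]` with `y = x₁ τ₁`
    (hx₂c : ContinuousOn x₂ (Icc (0 : ℝ) τ₂))
    (hx₂ : ∀ t ∈ Icc (0 : ℝ) τ₂,
      x₂ t = x₁ τ₁ + ∫ s in Icc (0 : ℝ) t, f (x₂ s) (u₂ s))
    -- `x = φ_{x₀}(u₁u₂)` on `[0, τ₁ + τ₂]`
    (hxc : ContinuousOn x (Icc (0 : ℝ) (τ₁ + τ₂)))
    (hx : ∀ t ∈ Icc (0 : ℝ) (τ₁ + τ₂),
      x t = x₀ + ∫ s in Icc (0 : ℝ) t, f (x s) (concatFn τ₁ u₁ u₂ s)) :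
    ∀ t ∈ Icc (0 : ℝ) (τ₁ + τ₂), x t = concatFn τ₁ x₁ x₂ t :=
  flow_concatenation_general f Lf hfLip hfMeas M hfBdd τ₁ τ₂ hτ₁ u₁ u₂ hu₁ hu₂ x₁ x₂ x x₀ hx₁c hx₁
    hx₂c hx₂ hxc hx
end
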